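/- For every τ in the closed standard fundamental domain F = {z ∈ ℍ : |z| ≥ 1, −1/2 ≤ Re z ≤ 1/2}, one has |χ*(τ)| ≤ e^{2π Im τ} + 82999. -/

import Mathlib

/-!
On `F` one has `Im τ ≥ √3/2`, so the nome `q = e^{2πiτ}` satisfies `|q| ≤ 1/200`. The divisor
bound `σ_k(n+2) ≤ (2^k + 1)·25^n` writes each Eisenstein series as `1 + c_k q (1 + T_k)` with
`|T_k| = O(|q|)` explicitly. In `E₄³ - E₆²` the linear terms `720 q + 1008 q = 1728 q` leave
`Δ = q (1 + O(q))`, precisely `|Δ| ≥ |q| (1 - 194|q|)`. Since `0 < 3/(π Im τ) ≤ 2`,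
`χ* = (E₂ - 3/(π Im τ)) E₄ E₆ / Δ` then satisfies
`|q χ*| ≤ (1 + 24.5|q|)(1 + 254|q|)(1 + 600|q|)/(1 - 194|q|) ≤ 1 + 82999|q|`.
-/

open Complex

noncomputable section

/-- `sigma' k n = ∑_{d ∣ n} d^k`, the sum of the k-th powers of the positive divisors of n. -/
def sigma' (k n : ℕ) : ℕ := ∑ d ∈ n.divisors, d ^ k

/-- `qpar τ = e^{2πiτ}`. -/
def qpar (τ : ℂ) : ℂ := Complex.exp (2 * Real.pi * Complex.I * τ)

/-- The quasimodular Eisenstein series `E₂(τ) = 1 - 24 ∑_{n≥1} σ₁(n) qⁿ`. -/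
def E2 (τ : ℂ) : ℂ := 1 - 24 * ∑' n : ℕ, (sigma' 1 (n + 1) : ℂ) * qpar τ ^ (n + 1)

/-- The Eisenstein series `E₄(τ) = 1 + 240 ∑_{n≥1} σ₃(n) qⁿ`. -/
def E4 (τ : ℂ) : ℂ := 1 + 240 * ∑' n : ℕ, (sigma' 3 (n + 1) : ℂ) * qpar τ ^ (n + 1)

/-- The Eisenstein series `E₆(τ) = 1 - 504 ∑_{n≥1} σ₅(n) qⁿ`. -/
def E6 (τ : ℂ) : ℂ := 1 - 504 * ∑' n : ℕ, (sigma' 5 (n + 1) : ℂ) * qpar τ ^ (n + 1)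

/-- The modular discriminant `Δ = (E₄³ - E₆²)/1728`. -/
def Δ' (τ : ℂ) : ℂ := (E4 τ ^ 3 - E6 τ ^ 2) / 1728

/-- The modular j-invariant `j = E₄³/Δ`. -/
def jinv (τ : ℂ) : ℂ := E4 τ ^ 3 / Δ' τ

/-- `χ = E₂E₄E₆/Δ`. -/
def χ' (τ : ℂ) : ℂ := E2 τ * E4 τ * E6 τ / Δ' τ

/-- `ξ = E₄E₆/Δ`. -/
def ξ' (τ : ℂ) : ℂ := E4 τ * E6 τ / Δ' τ

/-- The almost holomorphic modular function `χ*(τ) = χ(τ) - (3/(π Im τ)) ξ(τ)`. -/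
def χstar (τ : ℂ) : ℂ := χ' τ - (3 / (Real.pi * τ.im) : ℝ) * ξ' τ

/-- `τ` lies in the upper half-plane and satisfies `aτ² + bτ + c = 0` where
`a > 0` and `gcd(a,b,c) = 1`. -/
def QuadPoint (τ : ℂ) (a b c : ℤ) : Prop :=
  0 < τ.im ∧ 0 < a ∧ Int.gcd (Int.gcd a b) c = 1 ∧
    (a : ℂ) * τ ^ 2 + (b : ℂ) * τ + (c : ℂ) = 0

/-- `τ` is a quadratic point of the upper half-plane. -/
def IsQuadratic (τ : ℂ) : Prop := ∃ a b c : ℤ, QuadPoint τ a b c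

/-- `τ` is a quadratic point of discriminant `D = b² - 4ac`. -/
def HasDisc (τ : ℂ) (D : ℤ) : Prop :=
  ∃ a b c : ℤ, QuadPoint τ a b c ∧ D = b ^ 2 - 4 * a * c

/-- Membership in the closed standard fundamental domain
`F = {z ∈ ℍ : |z| ≥ 1, -1/2 ≤ Re z ≤ 1/2}`. -/
def inF (τ : ℂ) : Prop :=
  0 < τ.im ∧ 1 ≤ ‖τ‖ ∧ -(1 / 2) ≤ τ.re ∧ τ.re ≤ 1 / 2

/-- `τ` and `τ'` lie in the same `SL₂(ℤ)`-orbit under Möbius transformations. -/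
def MoebiusEquiv (τ τ' : ℂ) : Prop :=
  ∃ γ : Matrix.SpecialLinearGroup (Fin 2) ℤ,
    τ' = ((γ.1 0 0 : ℂ) * τ + (γ.1 0 1 : ℂ)) / ((γ.1 1 0 : ℂ) * τ + (γ.1 1 1 : ℂ))

lemma sigma'_le (k : ℕ) {m : ℕ} (hm : m ≠ 0) : sigma' k m ≤ m ^ k + (m / 2) ^ (k + 1) := by
  have hsub : m.properDivisors ⊆ Finset.Icc 1 (m / 2) := fun d hd => by
    have h2 := Nat.one_lt_div_of_mem_properDivisors hd
    have hd0 := Nat.pos_of_mem_properDivisors hd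
    refine Finset.mem_Icc.2 ⟨hd0, (Nat.le_div_iff_mul_le two_pos).2 ?_⟩
    calc d * 2 ≤ d * (m / d) := Nat.mul_le_mul_left d h2
      _ ≤ m := Nat.mul_div_le m d
  have hproper : ∑ d ∈ m.properDivisors, d ^ k ≤ (m / 2) ^ (k + 1) :=
    calc ∑ d ∈ m.properDivisors, d ^ k ≤ ∑ d ∈ Finset.Icc 1 (m / 2), d ^ k :=
          Finset.sum_le_sum_of_subset hsub
      _ ≤ (Finset.Icc 1 (m / 2)).card • (m / 2) ^ k :=
          Finset.sum_le_card_nsmul _ _ _ fun d hd => Nat.pow_le_pow_left (Finset.mem_Icc.1 hd).2 k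
      _ = (m / 2) ^ (k + 1) := by simp [pow_succ', Nat.card_Icc]
  rw [sigma', ← Nat.cons_self_properDivisors hm, Finset.sum_cons]
  omega

lemma add_two_le_two_mul_pow (n : ℕ) : (n : ℝ) + 2 ≤ 2 * (3 / 2) ^ n := by
  induction n with
  | zero => norm_num
  | succ n ih =>
    push_cast
    rw [pow_succ]
    nlinarith [pow_nonneg (by norm_num : (0:ℝ) ≤ 3 / 2) n]

lemma sigma'_add_two_le {k : ℕ} (hk : k ≤ 6) (n : ℕ) :
    (sigma' k (n + 2) : ℝ) ≤ (2 ^ k + 1) * 25 ^ n := by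
  have hgrowth : ∀ j ≤ 7, ((3 / 2 : ℝ) ^ j) ^ n ≤ 25 ^ n := fun j hj => by
    gcongr
    calc (3 / 2 : ℝ) ^ j ≤ (3 / 2) ^ 7 := pow_le_pow_right₀ (by norm_num) hj
      _ ≤ 25 := by norm_num
  have hfirst : ((n + 2 : ℕ) : ℝ) ^ k ≤ 2 ^ k * 25 ^ n :=
    calc ((n + 2 : ℕ) : ℝ) ^ k ≤ (2 * (3 / 2) ^ n) ^ k := by
          push_cast; gcongr; exact add_two_le_two_mul_pow n
      _ = 2 ^ k * ((3 / 2) ^ k) ^ n := by ring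
      _ ≤ 2 ^ k * 25 ^ n := mul_le_mul_of_nonneg_left (hgrowth k (by omega)) (by positivity)
  have hsecond : (((n + 2) / 2 : ℕ) : ℝ) ^ (k + 1) ≤ 25 ^ n :=
    calc (((n + 2) / 2 : ℕ) : ℝ) ^ (k + 1) ≤ ((3 / 2) ^ n) ^ (k + 1) := by
          gcongr
          calc (((n + 2) / 2 : ℕ) : ℝ) ≤ ((n + 2 : ℕ) : ℝ) / 2 := Nat.cast_div_le
            _ ≤ (3 / 2) ^ n := by push_cast; linarith [add_two_le_two_mul_pow n]
      _ = ((3 / 2) ^ (k + 1)) ^ n := by ring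
      _ ≤ 25 ^ n := hgrowth (k + 1) (by omega)
  calc (sigma' k (n + 2) : ℝ) ≤ ((n + 2 : ℕ) : ℝ) ^ k + (((n + 2) / 2 : ℕ) : ℝ) ^ (k + 1) := by
        exact_mod_cast sigma'_le k (by omega : n + 2 ≠ 0)
    _ ≤ (2 ^ k + 1) * 25 ^ n := by linarith

lemma exists_tsum_sigma'_eq {k : ℕ} (hk : k ≤ 6) {q : ℂ} (hq : ‖q‖ ≤ 1 / 200) :
    ∃ T : ℂ, ∑' n : ℕ, (sigma' k (n + 1) : ℂ) * q ^ (n + 1) = q * (1 + T) ∧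
      ‖T‖ ≤ 8 / 7 * (2 ^ k + 1) * ‖q‖ := by
  set f : ℕ → ℂ := fun n => (sigma' k (n + 2) : ℂ) * q ^ (n + 1)
  have hf : ∀ n, ‖f n‖ ≤ (2 ^ k + 1) * ‖q‖ * (1 / 8) ^ n := fun n =>
    calc ‖f n‖ = (sigma' k (n + 2) : ℝ) * ‖q‖ ^ n * ‖q‖ := by
          simp only [f, norm_mul, norm_pow, Complex.norm_natCast, pow_succ, mul_assoc]
      _ ≤ (2 ^ k + 1) * 25 ^ n * (1 / 200) ^ n * ‖q‖ := by
          gcongr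
          exact sigma'_add_two_le hk n
      _ = (2 ^ k + 1) * ‖q‖ * (1 / 8) ^ n := by
          rw [mul_assoc _ ((25 : ℝ) ^ n), ← mul_pow]; norm_num; ring
  have hgeom := (hasSum_geometric_of_lt_one (r := 1 / 8) (by norm_num) (by norm_num)).mul_left
    ((2 ^ k + 1) * ‖q‖)
  have hsum : Summable f := .of_norm_bounded hgeom.summable hf
  refine ⟨∑' n, f n, ?_, ?_⟩
  · rw [tsum_eq_zero_add' (by simpa only [f, pow_succ', mul_left_comm] using hsum.mul_left q)]
    rw [mul_add, mul_one, ← tsum_mul_left]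
    congr 1
    · simp [sigma']
    · exact tsum_congr fun n => by ring
  · calc ‖∑' n, f n‖ ≤ (2 ^ k + 1) * ‖q‖ * (1 - 1 / 8)⁻¹ := tsum_of_norm_bounded hgeom hf
      _ = 8 / 7 * (2 ^ k + 1) * ‖q‖ := by ring

lemma le_norm_disc {q T₃ T₅ : ℂ} (hq : ‖q‖ ≤ 1 / 200) (h₃ : ‖T₃‖ ≤ 11 * ‖q‖)
    (h₅ : ‖T₅‖ ≤ 38 * ‖q‖) :
    ‖q‖ * (1 - 194 * ‖q‖) ≤
      ‖((1 + 240 * (q * (1 + T₃))) ^ 3 - (1 - 504 * (q * (1 + T₅))) ^ 2) / 1728‖ := by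
  -- The `q²` coefficient `100 (1 + T₃)² - 147 (1 + T₅)²` must be kept as `-47 + O(q)`:
  -- bounding the two squares separately would give `|Δ / q - 1| > 1`.
  set ε := 5 / 12 * T₃ + 7 / 12 * T₅ + q * (100 * T₃ * (2 + T₃) - 147 * T₅ * (2 + T₅) - 47)
    + 8000 * q ^ 2 * (1 + T₃) ^ 3
  have hexpand : ((1 + 240 * (q * (1 + T₃))) ^ 3 - (1 - 504 * (q * (1 + T₅))) ^ 2) / 1728 =
      q * (1 + ε) := by
    simp only [ε]; ring
  have hε : ‖ε‖ ≤ 5 / 12 * ‖T₃‖ + 7 / 12 * ‖T₅‖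
      + ‖q‖ * (100 * ‖T₃‖ * (2 + ‖T₃‖) + 147 * ‖T₅‖ * (2 + ‖T₅‖) + 47)
      + 8000 * ‖q‖ ^ 2 * (1 + ‖T₃‖) ^ 3 := by
    refine (norm_add₄_le ..).trans ?_
    simp only [norm_mul, norm_pow]
    norm_num
    gcongr
    · refine (norm_sub_le _ _).trans ?_
      norm_num
      refine (norm_sub_le _ _).trans ?_
      simp only [norm_mul]
      norm_num
      gcongr <;> exact (norm_add_le _ _).trans (by norm_num)
    · exact (norm_add_le _ _).trans (by norm_num)
  have hr := norm_nonneg q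
  have hbracket : 100 * ‖T₃‖ * (2 + ‖T₃‖) + 147 * ‖T₅‖ * (2 + ‖T₅‖) + 47 ≤ 120 := by
    nlinarith [norm_nonneg T₃, norm_nonneg T₅]
  have hcube : 8000 * ‖q‖ * (1 + ‖T₃‖) ^ 3 ≤ 47 := by
    have : (1 + ‖T₃‖) ^ 3 ≤ (211 / 200) ^ 3 := by gcongr; linarith
    nlinarith
  have hε' : ‖ε‖ ≤ 194 * ‖q‖ := by nlinarith
  rw [hexpand, norm_mul]
  gcongr
  calc 1 - 194 * ‖q‖ ≤ 1 - ‖ε‖ := by linarith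
    _ ≤ ‖1 + ε‖ := by simpa using norm_sub_norm_le (1 : ℂ) (-ε)

lemma norm_add_mul_le (a c q T : ℂ) : ‖a + c * (q * (1 + T))‖ ≤ ‖a‖ + ‖c‖ * (‖q‖ * (1 + ‖T‖)) := by
  refine (norm_add_le _ _).trans ?_
  simp only [norm_mul]
  gcongr
  exact (norm_add_le _ _).trans (by rw [norm_one])

lemma norm_chi_quotient_le {q T₁ T₃ T₅ : ℂ} {t : ℝ} (hq0 : q ≠ 0) (hq : ‖q‖ ≤ 1 / 200)
    (h₁ : ‖T₁‖ ≤ 4 * ‖q‖) (h₃ : ‖T₃‖ ≤ 11 * ‖q‖) (h₅ : ‖T₅‖ ≤ 38 * ‖q‖)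
    (ht0 : 0 ≤ t) (ht2 : t ≤ 2) :
    ‖(1 - 24 * (q * (1 + T₁)) - t) * (1 + 240 * (q * (1 + T₃))) * (1 - 504 * (q * (1 + T₅))) /
      (((1 + 240 * (q * (1 + T₃))) ^ 3 - (1 - 504 * (q * (1 + T₅))) ^ 2) / 1728)‖ ≤
      ‖q‖⁻¹ + 82999 := by
  set r := ‖q‖
  have hr : 0 < r := norm_pos_iff.2 hq0
  have hE₂ : ‖1 - 24 * (q * (1 + T₁)) - t‖ ≤ 1 + 49 / 2 * r := by
    have ht : ‖1 - (t : ℂ)‖ ≤ 1 := by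
      rw [← Complex.ofReal_one, ← Complex.ofReal_sub, Complex.norm_real, Real.norm_eq_abs, abs_le]
      constructor <;> linarith
    calc ‖1 - 24 * (q * (1 + T₁)) - t‖ = ‖(1 - t) + -24 * (q * (1 + T₁))‖ := by ring_nf
      _ ≤ 1 + 24 * (r * (1 + 4 * r)) := by
          refine (norm_add_mul_le _ _ _ _).trans ?_
          norm_num
          gcongr
      _ ≤ 1 + 49 / 2 * r := by nlinarith
  have hE₄ : ‖1 + 240 * (q * (1 + T₃))‖ ≤ 1 + 254 * r := by
    refine (norm_add_mul_le _ _ _ _).trans ?_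
    norm_num
    nlinarith
  have hE₆ : ‖1 - 504 * (q * (1 + T₅))‖ ≤ 1 + 600 * r := by
    calc ‖1 - 504 * (q * (1 + T₅))‖ = ‖1 + -504 * (q * (1 + T₅))‖ := by ring_nf
      _ ≤ 1 + 600 * r := by
          refine (norm_add_mul_le _ _ _ _).trans ?_
          norm_num
          nlinarith
  have hΔ := le_norm_disc hq h₃ h₅
  have hpos : 0 < r * (1 - 194 * r) := by nlinarith
  rw [norm_div, norm_mul, norm_mul, div_le_iff₀ (hpos.trans_le hΔ)]
  calc _ ≤ (1 + 49 / 2 * r) * (1 + 254 * r) * (1 + 600 * r) := by gcongr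
    _ ≤ (1 + 82999 * r) * (1 - 194 * r) := by nlinarith
    _ = (r⁻¹ + 82999) * (r * (1 - 194 * r)) := by field_simp
    _ ≤ _ := by gcongr

lemma three_fourths_le_im_sq {τ : ℂ} (hτ : inF τ) : 3 / 4 ≤ τ.im ^ 2 := by
  obtain ⟨-, hnorm, hre₁, hre₂⟩ := hτ
  have h : 1 ≤ ‖τ‖ ^ 2 := one_le_pow₀ hnorm
  rw [Complex.sq_norm, Complex.normSq_apply] at h
  nlinarith

lemma le_im_of_inF {τ : ℂ} (hτ : inF τ) : 0.866 ≤ τ.im := by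
  nlinarith [three_fourths_le_im_sq hτ, hτ.1]

lemma norm_qpar (τ : ℂ) : ‖qpar τ‖ = (Real.exp (2 * Real.pi * τ.im))⁻¹ := by
  rw [qpar, Complex.norm_exp, ← Real.exp_neg]
  congr 1
  simp

lemma two_hundred_le_exp_of_inF {τ : ℂ} (hτ : inF τ) : 200 ≤ Real.exp (2 * Real.pi * τ.im) := by
  have hexp5 : (2.7182818283 : ℝ) ^ 5 ≤ Real.exp 5 := by
    rw [show (5 : ℝ) = (5 : ℕ) * 1 by norm_num, Real.exp_nat_mul]
    gcongr
    exact Real.exp_one_gt_d9.le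
  calc (200 : ℝ) ≤ 2.7182818283 ^ 5 * (0.4 + 1) := by norm_num
    _ ≤ Real.exp 5 * Real.exp 0.4 := by gcongr; exact Real.add_one_le_exp _
    _ = Real.exp 5.4 := by rw [← Real.exp_add]; norm_num
    _ ≤ Real.exp (2 * Real.pi * τ.im) := by
        gcongr
        nlinarith [Real.pi_gt_d2, le_im_of_inF hτ]

lemma three_div_pi_mul_im_le_two {τ : ℂ} (hτ : inF τ) : 3 / (Real.pi * τ.im) ≤ 2 := by
  rw [div_le_iff₀ (by positivity [hτ.1])]
  nlinarith [Real.pi_gt_d2, le_im_of_inF hτ]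

lemma χstar_eq_div (τ : ℂ) :
    χstar τ = (E2 τ - (3 / (Real.pi * τ.im) : ℝ)) * E4 τ * E6 τ / Δ' τ := by
  simp only [χstar, χ', ξ']
  ring

/-- For `τ` in the closed standard fundamental domain, `|χ*(τ)| ≤ e^{2π Im τ} + 82999`. -/
theorem chi_star_upper_bound (τ : ℂ) (hτ : inF τ) :
    ‖χstar τ‖ ≤ Real.exp (2 * Real.pi * τ.im) + 82999 := by
  have hq : ‖qpar τ‖ ≤ 1 / 200 := by
    rw [norm_qpar, one_div]
    exact inv_anti₀ (by norm_num) (two_hundred_le_exp_of_inF hτ)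
  obtain ⟨T₁, hS₁, hT₁⟩ := exists_tsum_sigma'_eq (k := 1) (by norm_num) hq
  obtain ⟨T₃, hS₃, hT₃⟩ := exists_tsum_sigma'_eq (k := 3) (by norm_num) hq
  obtain ⟨T₅, hS₅, hT₅⟩ := exists_tsum_sigma'_eq (k := 5) (by norm_num) hq
  have hbound := norm_chi_quotient_le (q := qpar τ) (Complex.exp_ne_zero _) hq
    (hT₁.trans (by gcongr; norm_num)) (hT₃.trans (by gcongr; norm_num))
    (hT₅.trans (by gcongr; norm_num)) (by positivity [hτ.1]) (three_div_pi_mul_im_le_two hτ)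
  rw [norm_qpar, inv_inv] at hbound
  rwa [χstar_eq_div, Δ', E2, E4, E6, hS₁, hS₃, hS₅]
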